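/- arXiv:1902.05678 — 6 statements merged into one kernel-verified Lean document; each statement's English description precedes it below -/
import Mathlib

section
/- Strategy-proofness transfers through listwise tie-breaking: let τ be a tie-breaking rule that maps each SMTI instance I to an SMI instance τ(I) by replacing each person p's preference preorder with a linear extension determined solely by p's own list (so if two SMTI instances agree on p's list, the broken lists of p agree, and if they differ only in one person's list, the broken instances differ only in that person's list). If S' is a man-strategy-proof stable mechanism for SMI instances, then the mechanism S defined by S(I) = S'(τ(I)) is a man-strategy-proof 2-approximate-stable mechanism for SMTI instances. -/
/-- An instance of the stable marriage problem with ties and incomplete lists (SMTI),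
with men of type `α` and women of type `β`.  Each person's preference list is
represented by a rank function: `mpref m w = none` means woman `w` is unacceptable
to man `m`, and `mpref m w = some r` means `w` is acceptable with rank `r`
(smaller rank = more preferred; equal ranks = a tie).  This encodes exactly a
total preorder on the set of acceptable partners. -/
structure SMInst (α β : Type) where
  mpref : α → β → Option ℕ
  wpref : β → α → Option ℕ

namespace SMInst

variable {α β : Type}

/-- Woman `w` is acceptable to man `m`. -/
def mAcc (I : SMInst α β) (m : α) (w : β) : Prop := (I.mpref m w).isSome

/-- Man `m` is acceptable to woman `w`. -/
def wAcc (I : SMInst α β) (w : β) (m : α) : Prop := (I.wpref w m).isSome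

/-- Man `m` strictly prefers woman `w` to woman `w'`. -/
def mPref (I : SMInst α β) (m : α) (w w' : β) : Prop :=
  ∃ r r', I.mpref m w = some r ∧ I.mpref m w' = some r' ∧ r < r'

/-- Woman `w` strictly prefers man `m` to man `m'`. -/
def wPref (I : SMInst α β) (w : β) (m m' : α) : Prop :=
  ∃ r r', I.wpref w m = some r ∧ I.wpref w m' = some r' ∧ r < r'

/-- `M` is a matching of `I`: all pairs mutually acceptable and no person in two pairs. -/
def IsMatching (I : SMInst α β) (M : Finset (α × β)) : Prop :=
  (∀ p ∈ M, I.mAcc p.1 p.2 ∧ I.wAcc p.2 p.1) ∧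
  (∀ p ∈ M, ∀ q ∈ M, p.1 = q.1 → p = q) ∧
  (∀ p ∈ M, ∀ q ∈ M, p.2 = q.2 → p = q)

/-- Man `m` is single (unmatched) in `M`. -/
def mSingle (M : Finset (α × β)) (m : α) : Prop := ∀ w, (m, w) ∉ M

/-- Woman `w` is single (unmatched) in `M`. -/
def wSingle (M : Finset (α × β)) (w : β) : Prop := ∀ m, (m, w) ∉ M

/-- `(m, w)` blocks `M` in instance `I`. -/
def Blocks (I : SMInst α β) (M : Finset (α × β)) (m : α) (w : β) : Prop :=
  I.mAcc m w ∧ I.wAcc w m ∧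
  (mSingle M m ∨ ∃ w', (m, w') ∈ M ∧ I.mPref m w w') ∧
  (wSingle M w ∨ ∃ m', (m', w) ∈ M ∧ I.wPref w m m')

/-- `M` is a (weakly) stable matching of `I`. -/
def IsStable (I : SMInst α β) (M : Finset (α × β)) : Prop :=
  I.IsMatching M ∧ ∀ m w, ¬ I.Blocks M m w

/-- Man `m` prefers matching `M'` to matching `M`, with respect to his list in `I`:
he is matched in `M'` to an acceptable partner, and he is either single in `M`
or strictly prefers his `M'`-partner to his `M`-partner. -/
def mPrefMatching (I : SMInst α β) (m : α) (M' M : Finset (α × β)) : Prop :=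
  ∃ w, (m, w) ∈ M' ∧ I.mAcc m w ∧
    (mSingle M m ∨ ∃ w', (m, w') ∈ M ∧ I.mPref m w w')

/-- Woman `w` prefers matching `M'` to matching `M`, with respect to her list in `I`. -/
def wPrefMatching (I : SMInst α β) (w : β) (M' M : Finset (α × β)) : Prop :=
  ∃ m, (m, w) ∈ M' ∧ I.wAcc w m ∧
    (wSingle M w ∨ ∃ m', (m', w) ∈ M ∧ I.wPref w m m')

/-- `I` and `I'` differ only in man `m`'s preference list. -/
def mDiffOnly (I I' : SMInst α β) (m : α) : Prop :=
  I.wpref = I'.wpref ∧ ∀ m', m' ≠ m → I.mpref m' = I'.mpref m'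

/-- `I` and `I'` differ only in woman `w`'s preference list. -/
def wDiffOnly (I I' : SMInst α β) (w : β) : Prop :=
  I.mpref = I'.mpref ∧ ∀ w', w' ≠ w → I.wpref w' = I'.wpref w'

/-- Men's lists contain no ties. -/
def MStrict (I : SMInst α β) : Prop :=
  ∀ m w w', I.mpref m w = I.mpref m w' → I.mAcc m w → w = w'

/-- Women's lists contain no ties. -/
def WStrict (I : SMInst α β) : Prop :=
  ∀ w m m', I.wpref w m = I.wpref w m' → I.wAcc w m → m = m'

/-- `I` is an SMI instance: no ties at all (all lists strictly ordered). -/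
def NoTies (I : SMInst α β) : Prop := I.MStrict ∧ I.WStrict

/-- `I` is an SMTI-1TM instance: ties may occur only in men's lists,
i.e. women's lists are strictly ordered. -/
def OneTM (I : SMInst α β) : Prop := I.WStrict

/-- `I'` is obtained from `I` by breaking ties: same acceptable sets, and every
strict preference of `I` is preserved in `I'` (so each person's list in `I'` is a
linear extension of the corresponding total preorder in `I`). -/
def Refines (I I' : SMInst α β) : Prop :=
  (∀ m w, I.mAcc m w ↔ I'.mAcc m w) ∧
  (∀ w m, I.wAcc w m ↔ I'.wAcc w m) ∧
  (∀ m w w', I.mPref m w w' → I'.mPref m w w') ∧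
  (∀ w m m', I.wPref w m m' → I'.wPref w m m')

end SMInst


section Aux
open SMInst
variable {α β : Type}

lemma stable_of_refines {I I' : SMInst α β} (h : SMInst.Refines I I')
    {M : Finset (α × β)} (hM : I'.IsStable M) : I.IsStable M := by
  obtain ⟨hA, hW, hmp, hwp⟩ := h
  obtain ⟨⟨h1, h2, h3⟩, hb⟩ := hM
  refine ⟨⟨fun p hp => ?_, h2, h3⟩, fun m w hblk => hb m w ?_⟩
  · obtain ⟨ha, hb'⟩ := h1 p hp
    exact ⟨(hA _ _).2 ha, (hW _ _).2 hb'⟩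
  · obtain ⟨b1, b2, b3, b4⟩ := hblk
    refine ⟨(hA _ _).1 b1, (hW _ _).1 b2, ?_, ?_⟩
    · rcases b3 with h | ⟨w', hw', hpw⟩
      · exact Or.inl h
      · exact Or.inr ⟨w', hw', hmp _ _ _ hpw⟩
    · rcases b4 with h | ⟨m', hm', hpm⟩
      · exact Or.inl h
      · exact Or.inr ⟨m', hm', hwp _ _ _ hpm⟩

lemma stable_card_le {I : SMInst α β} {M Mopt : Finset (α × β)}
    (hM : I.IsStable M) (hMopt : I.IsStable Mopt) : Mopt.card ≤ 2 * M.card := by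
  classical
  have hex : ∀ p ∈ Mopt, ∃ q, q ∈ M ∧ (q.1 = p.1 ∨ q.2 = p.2) := by
    intro p hp
    by_contra hcon
    push_neg at hcon
    obtain ⟨hma, hwa⟩ := hMopt.1.1 p hp
    apply hM.2 p.1 p.2
    refine ⟨hma, hwa, Or.inl ?_, Or.inl ?_⟩
    · intro w hw
      exact (hcon (p.1, w) hw).1 rfl
    · intro m hm
      exact (hcon (m, p.2) hm).2 rfl
  set f : α × β → α × β := fun p =>
    if h : ∃ q, q ∈ M ∧ (q.1 = p.1 ∨ q.2 = p.2) then h.choose else p with hf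
  have hmaps : ∀ p ∈ Mopt, f p ∈ M := by
    intro p hp
    have h := hex p hp
    simp only [hf, dif_pos h]
    exact h.choose_spec.1
  have hshare : ∀ p ∈ Mopt, (f p).1 = p.1 ∨ (f p).2 = p.2 := by
    intro p hp
    have h := hex p hp
    simp only [hf, dif_pos h]
    exact h.choose_spec.2
  refine Finset.card_le_mul_card_image_of_maps_to hmaps 2 ?_
  intro q hq
  have hsub : (Mopt.filter fun p => f p = q) ⊆
      (Mopt.filter fun p => p.1 = q.1) ∪ (Mopt.filter fun p => p.2 = q.2) := by
    intro p hp
    rw [Finset.mem_filter] at hp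
    rcases hshare p hp.1 with h | h
    · exact Finset.mem_union_left _ (Finset.mem_filter.2 ⟨hp.1, by rw [← hp.2, h]⟩)
    · exact Finset.mem_union_right _ (Finset.mem_filter.2 ⟨hp.1, by rw [← hp.2, h]⟩)
  calc (Mopt.filter fun p => f p = q).card
      ≤ ((Mopt.filter fun p => p.1 = q.1) ∪ (Mopt.filter fun p => p.2 = q.2)).card :=
        Finset.card_le_card hsub
    _ ≤ (Mopt.filter fun p => p.1 = q.1).card + (Mopt.filter fun p => p.2 = q.2).card :=
        Finset.card_union_le _ _
    _ ≤ 1 + 1 := by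
        gcongr
        · exact Finset.card_le_one.2 (fun a ha b hb => by
            rw [Finset.mem_filter] at ha hb
            exact hMopt.1.2.1 a ha.1 b hb.1 (ha.2.trans hb.2.symm))
        · exact Finset.card_le_one.2 (fun a ha b hb => by
            rw [Finset.mem_filter] at ha hb
            exact hMopt.1.2.2 a ha.1 b hb.1 (ha.2.trans hb.2.symm))
    _ = 2 := rfl

end Aux

/-- Strategy-proofness transfers through listwise tie-breaking: if `τ` maps each SMTI
instance to an SMI instance by breaking each person's ties in a way depending only on
that person's own list, and `S'` is a man-strategy-proof stable mechanism for SMI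
instances, then `I ↦ S'(τ I)` is a man-strategy-proof stable 2-approximate-stable
mechanism for SMTI instances. -/
theorem sp_transfers_through_listwise_tie_breaking
    (τ : ∀ n : ℕ, SMInst (Fin n) (Fin n) → SMInst (Fin n) (Fin n))
    (hties : ∀ (n : ℕ) (I : SMInst (Fin n) (Fin n)), (τ n I).NoTies)
    (href : ∀ (n : ℕ) (I : SMInst (Fin n) (Fin n)), SMInst.Refines I (τ n I))
    (hlistm : ∀ (n : ℕ) (I J : SMInst (Fin n) (Fin n)) (m : Fin n),
        I.mpref m = J.mpref m → (τ n I).mpref m = (τ n J).mpref m)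
    (hlistw : ∀ (n : ℕ) (I J : SMInst (Fin n) (Fin n)) (w : Fin n),
        I.wpref w = J.wpref w → (τ n I).wpref w = (τ n J).wpref w)
    (S' : ∀ n : ℕ, SMInst (Fin n) (Fin n) → Finset (Fin n × Fin n))
    (hS'stable : ∀ (n : ℕ) (I : SMInst (Fin n) (Fin n)), I.NoTies → I.IsStable (S' n I))
    (hS'sp : ¬ ∃ (n : ℕ) (I I' : SMInst (Fin n) (Fin n)) (m : Fin n),
        I.NoTies ∧ I'.NoTies ∧ SMInst.mDiffOnly I I' m ∧
        I.mPrefMatching m (S' n I') (S' n I)) :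
    (∀ (n : ℕ) (I : SMInst (Fin n) (Fin n)),
        I.IsStable (S' n (τ n I)) ∧
        ∀ Mopt : Finset (Fin n × Fin n), I.IsStable Mopt →
          Mopt.card ≤ 2 * (S' n (τ n I)).card) ∧
    ¬ ∃ (n : ℕ) (I I' : SMInst (Fin n) (Fin n)) (m : Fin n),
        SMInst.mDiffOnly I I' m ∧
        I.mPrefMatching m (S' n (τ n I')) (S' n (τ n I)) := by
  constructor
  · intro n I
    have hst : I.IsStable (S' n (τ n I)) :=
      stable_of_refines (href n I) (hS'stable n (τ n I) (hties n I))
    refine ⟨hst, fun Mopt hMopt => stable_card_le hst hMopt⟩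
  · rintro ⟨n, I, I', m, hd, hpref⟩
    apply hS'sp
    refine ⟨n, τ n I, τ n I', m, hties n I, hties n I', ?_, ?_⟩
    · exact ⟨funext fun w => hlistw n I I' w (congrFun hd.1 w),
        fun m' hne => hlistm n I I' m' (hd.2 m' hne)⟩
    · obtain ⟨w, hw, hacc, hrest⟩ := hpref
      obtain ⟨hA, hW, hmp, hwp⟩ := href n I
      refine ⟨w, hw, (hA m w).1 hacc, ?_⟩
      rcases hrest with h | ⟨w', hw', hp⟩
      · exact Or.inl h
      · exact Or.inr ⟨w', hw', hmp _ _ _ hp⟩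
end

section
/- Any stable matching of an SMTI instance is a 2-approximation of a maximum one: if M and N are both (weakly) stable matchings of the same SMTI instance, then |N| ≤ 2·|M|. -/
/-- Any stable matching of an SMTI instance is a 2-approximation of a maximum one:
if `M` and `N` are both (weakly) stable matchings of the same SMTI instance,
then `|N| ≤ 2|M|`. -/
theorem stable_matching_two_approx {α β : Type} (I : SMInst α β)
    (M N : Finset (α × β)) (hM : I.IsStable M) (hN : I.IsStable N) :
    N.card ≤ 2 * M.card := by
  classical
  -- key: every pair in N has at least one member matched in M
  have key : ∀ p ∈ N, (∃ q ∈ M, q.1 = p.1) ∨ (∃ q ∈ M, q.2 = p.2) := by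
    intro p hp
    by_contra hc
    push_neg at hc
    obtain ⟨h1, h2⟩ := hc
    have hacc := hN.1.1 p hp
    exact hM.2 p.1 p.2 ⟨hacc.1, hacc.2,
      Or.inl (fun w hw => h1 (p.1, w) hw rfl),
      Or.inl (fun m hm => h2 (m, p.2) hm rfl)⟩
  -- map each pair in N to (pair in M, bool)
  set f : α × β → (α × β) × Bool := fun p =>
    if h : ∃ q ∈ M, q.1 = p.1 then (h.choose, true)
    else if h2 : ∃ q ∈ M, q.2 = p.2 then (h2.choose, false)
    else ((p, false))
  have hcard : N.card ≤ (M ×ˢ (Finset.univ : Finset Bool)).card := by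
    apply Finset.card_le_card_of_injOn f
    · intro p hp
      rcases key p hp with h | h
      · simp only [f, dif_pos h]
        exact Finset.mem_product.2 ⟨h.choose_spec.1, Finset.mem_univ _⟩
      · by_cases h1 : ∃ q ∈ M, q.1 = p.1
        · simp only [f, dif_pos h1]
          exact Finset.mem_product.2 ⟨h1.choose_spec.1, Finset.mem_univ _⟩
        · simp only [f, dif_neg h1, dif_pos h]
          exact Finset.mem_product.2 ⟨h.choose_spec.1, Finset.mem_univ _⟩
    · intro p hp p' hp' heq
      by_cases h1 : ∃ q ∈ M, q.1 = p.1 <;> by_cases h1' : ∃ q ∈ M, q.1 = p'.1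
      · simp only [f, dif_pos h1, dif_pos h1', Prod.mk.injEq] at heq
        have e1 : h1.choose.1 = p.1 := h1.choose_spec.2
        have e2 : h1'.choose.1 = p'.1 := h1'.choose_spec.2
        have : p.1 = p'.1 := by rw [← e1, ← e2, heq.1]
        exact hN.1.2.1 p hp p' hp' this
      · rcases key p' hp' with h | h2'
        · exact absurd h h1'
        simp only [f, dif_pos h1, dif_neg h1', dif_pos h2', Prod.mk.injEq] at heq
        exact absurd heq.2 (by simp)
      · rcases key p hp with h | h2
        · exact absurd h h1
        simp only [f, dif_neg h1, dif_pos h2, dif_pos h1', Prod.mk.injEq] at heq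
        exact absurd heq.2 (by simp)
      · rcases key p hp with h | h2
        · exact absurd h h1
        rcases key p' hp' with h | h2'
        · exact absurd h h1'
        simp only [f, dif_neg h1, dif_neg h1', dif_pos h2, dif_pos h2',
          Prod.mk.injEq] at heq
        have e1 : h2.choose.2 = p.2 := h2.choose_spec.2
        have e2 : h2'.choose.2 = p'.2 := h2'.choose_spec.2
        have : p.2 = p'.2 := by rw [← e1, ← e2, heq.1]
        exact hN.1.2.2 p hp p' hp' this
  simpa [Finset.card_product, mul_comm] using hcard
end

section
/- In the translated instance, every auxiliary man is matched: let I be an SMTI-1TM instance and I' its translated SMI instance. In every stable matching M' of I', each man b_j is matched (to s_j or to t_j); consequently, for each j at most one of the women s_j, t_j can be matched in M' to a man of the form a_i. -/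
namespace SMInst

/-- The translation of an SMTI-1TM instance `I` (with men/women indexed by `Fin n`)
into an SMI instance `I'`.  Men of `I'`: `Sum.inl i` is `a_i`, `Sum.inr j` is `b_j`.
Women of `I'`: `Sum.inl j` is `s_j`, `Sum.inr j` is `t_j`.
The strict list of `a_i` replaces each tie `(w_{j_1} … w_{j_k})` (indices increasing)
of `m_i`'s list by the strict segment `t_{j_1} … t_{j_k} s_{j_1} … s_{j_k}`;
`b_j`'s list is `s_j t_j`; `s_j`'s list is `Q(w_j)` followed by `b_j`; and
`t_j`'s list is `b_j` followed by `Q(w_j)`, where `Q(w_j)` is `w_j`'s list with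
each `m_i` replaced by `a_i`. -/
def translate {n : ℕ} (I : SMInst (Fin n) (Fin n)) :
    SMInst (Fin n ⊕ Fin n) (Fin n ⊕ Fin n) where
  mpref := fun a w =>
    match a, w with
    | Sum.inl i, Sum.inl j =>
        (I.mpref i j).map fun r =>
          2 * n * r + n +
            (Finset.univ.filter fun j' : Fin n => I.mpref i j' = some r ∧ j' < j).card
    | Sum.inl i, Sum.inr j =>
        (I.mpref i j).map fun r =>
          2 * n * r +
            (Finset.univ.filter fun j' : Fin n => I.mpref i j' = some r ∧ j' < j).card
    | Sum.inr i, Sum.inl j => if j = i then some 0 else none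
    | Sum.inr i, Sum.inr j => if j = i then some 1 else none
  wpref := fun w a =>
    match w, a with
    | Sum.inl j, Sum.inl i => I.wpref j i
    | Sum.inl j, Sum.inr i =>
        if i = j then some ((Finset.univ.sup fun i' : Fin n => (I.wpref j i').getD 0) + 1)
        else none
    | Sum.inr j, Sum.inl i => (I.wpref j i).map (· + 1)
    | Sum.inr j, Sum.inr i => if i = j then some 0 else none

/-- The projection of a matching `M'` of the translated instance back to the
original instance: `M = {(m_i, w_j) : (a_i, s_j) ∈ M' ∨ (a_i, t_j) ∈ M'}`. -/
def projectM {n : ℕ} (M' : Finset ((Fin n ⊕ Fin n) × (Fin n ⊕ Fin n))) :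
    Finset (Fin n × Fin n) :=
  Finset.univ.filter fun p =>
    (Sum.inl p.1, Sum.inl p.2) ∈ M' ∨ (Sum.inl p.1, Sum.inr p.2) ∈ M'

end SMInst

/-!
Woman `t_j` ranks `b_j` strictly first, so if `b_j` were single then `(b_j, t_j)` would block
`M'`. Hence `b_j` occupies one of `s_j`, `t_j`, the only women on his list, and that woman
cannot also be matched to some `a_i`.
-/

namespace SMInst

variable {α β : Type}

theorem IsMatching.man_eq_of_mem {I : SMInst α β} {M : Finset (α × β)} (hM : I.IsMatching M)
    {m m' : α} {w : β} (h : (m, w) ∈ M) (h' : (m', w) ∈ M) : m = m' :=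
  congrArg Prod.fst (hM.2.2 _ h _ h' rfl)

theorem IsStable.not_mSingle_of_favourite {I : SMInst α β} {M : Finset (α × β)}
    (hM : I.IsStable M) {m : α} {w : β} (hmw : I.mAcc m w) (hwm : I.wAcc w m)
    (hfav : ∀ m', m' ≠ m → I.wAcc w m' → I.wPref w m m') : ¬ mSingle M m := by
  intro hsingle
  refine hM.2 m w ⟨hmw, hwm, Or.inl hsingle, ?_⟩
  by_cases hw : wSingle M w
  · exact Or.inl hw
  · obtain ⟨m', hm'w⟩ : ∃ m', (m', w) ∈ M := by
      simpa only [wSingle, not_forall, not_not] using hw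
    have hne : m' ≠ m := by rintro rfl; exact hsingle w hm'w
    exact Or.inr ⟨m', hm'w, hfav m' hne ((hM.1.1 _ hm'w).2)⟩

variable {n : ℕ} (I : SMInst (Fin n) (Fin n))

theorem translate_mAcc_inr_iff (j : Fin n) (w : Fin n ⊕ Fin n) :
    (translate I).mAcc (Sum.inr j) w ↔ w = Sum.inl j ∨ w = Sum.inr j := by
  rcases w with k | k <;> by_cases hk : k = j <;> simp [mAcc, translate, hk]

theorem translate_wAcc_inr_inr (j : Fin n) : (translate I).wAcc (Sum.inr j) (Sum.inr j) := by
  simp [wAcc, translate]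

theorem translate_wPref_inr_inr (j : Fin n) (m : Fin n ⊕ Fin n) (hm : m ≠ Sum.inr j)
    (hacc : (translate I).wAcc (Sum.inr j) m) :
    (translate I).wPref (Sum.inr j) (Sum.inr j) m := by
  rcases m with i | i
  · obtain ⟨r, hr⟩ := Option.isSome_iff_exists.mp (by simpa [wAcc, translate] using hacc)
    exact ⟨0, r + 1, by simp [translate], by simp [translate, hr], r.succ_pos⟩
  · have hij : i = j := by
      by_contra hij
      simp [wAcc, translate, hij] at hacc
    exact absurd (congrArg Sum.inr hij) hm

theorem translate_inr_matched {M' : Finset ((Fin n ⊕ Fin n) × (Fin n ⊕ Fin n))}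
    (hM' : (translate I).IsStable M') (j : Fin n) :
    (Sum.inr j, Sum.inl j) ∈ M' ∨ (Sum.inr j, Sum.inr j) ∈ M' := by
  have hmatched := hM'.not_mSingle_of_favourite ((translate_mAcc_inr_iff I j _).2 (Or.inr rfl))
    (translate_wAcc_inr_inr I j) (translate_wPref_inr_inr I j)
  obtain ⟨w, hw⟩ : ∃ w, (Sum.inr j, w) ∈ M' := by
    simpa only [mSingle, not_forall, not_not] using hmatched
  rcases (translate_mAcc_inr_iff I j w).1 (hM'.1.1 _ hw).1 with rfl | rfl
  · exact Or.inl hw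
  · exact Or.inr hw

end SMInst

theorem translated_auxiliary_men_matched_general {n : ℕ}
    (I : SMInst (Fin n) (Fin n))
    (M' : Finset ((Fin n ⊕ Fin n) × (Fin n ⊕ Fin n)))
    (hM' : (SMInst.translate I).IsStable M') (j : Fin n) :
    ((Sum.inr j, Sum.inl j) ∈ M' ∨ (Sum.inr j, Sum.inr j) ∈ M') ∧
    ¬ ∃ i i' : Fin n, (Sum.inl i, Sum.inl j) ∈ M' ∧ (Sum.inl i', Sum.inr j) ∈ M' := by
  have hb := SMInst.translate_inr_matched I hM' j
  refine ⟨hb, ?_⟩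
  rintro ⟨i, i', hs, ht⟩
  rcases hb with hbj | hbj
  · exact Sum.inl_ne_inr (hM'.1.man_eq_of_mem hs hbj)
  · exact Sum.inl_ne_inr (hM'.1.man_eq_of_mem ht hbj)

/-- In every stable matching `M'` of the translated instance `I'`, each auxiliary man
`b_j` is matched (to `s_j` or `t_j`); consequently, for each `j` at most one of the
women `s_j`, `t_j` is matched in `M'` to a man of the form `a_i`. -/
theorem translated_auxiliary_men_matched {n : ℕ}
    (I : SMInst (Fin n) (Fin n)) (h1tm : I.OneTM)
    (M' : Finset ((Fin n ⊕ Fin n) × (Fin n ⊕ Fin n)))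
    (hM' : (SMInst.translate I).IsStable M') (j : Fin n) :
    ((Sum.inr j, Sum.inl j) ∈ M' ∨ (Sum.inr j, Sum.inr j) ∈ M') ∧
    ¬ ∃ i i' : Fin n, (Sum.inl i, Sum.inl j) ∈ M' ∧ (Sum.inl i', Sum.inr j) ∈ M' :=
  translated_auxiliary_men_matched_general I M' hM' j
end

section
/- The projected matching is a 1.5-approximation: let I be an SMTI-1TM instance, I' its translated SMI instance, and M' a stable matching of I'. Then the projection M of M' satisfies 3·|M| ≥ 2·|N| for every (weakly) stable matching N of I; in particular |M_opt|/|M| ≤ 1.5 for a maximum-size stable matching M_opt of I. -/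
/-!
Both `projectM M'` and `N` are matchings of `I`, and stability of `M'` rules out, relative to
`N`, every `projectM M'`-augmenting path of length one or three. For a path of length three
`m_{i'} – w_j – m_i – w_{j₀}` (edges from `N`, `M`, `N`, both ends unmatched) the man `a_i` must
be matched to `s_j`; since `a_{i'}` is single, `w_j` strictly prefers `m_i` to `m_{i'}`, and
since `t_{j₀}` is single, `m_i` strictly prefers `w_j` to `w_{j₀}`, so `(m_i, w_j)` blocks `N`.
Without such paths, counting the edges of `N` by how many of their endpoints are matched in
`M = projectM M'` gives `2|N| ≤ 3|M|`.
-/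

open Finset Sum

theorem Finset.card_le_card_of_injOn_of_forall_exists {ι γ : Type*} [DecidableEq γ]
    {S E : Finset ι} (f : ι → γ) (hf : Set.InjOn f S) (h : ∀ p ∈ S, ∃ e ∈ E, f e = f p) :
    #S ≤ #E :=
  calc #S = #(S.image f) := (card_image_of_injOn hf).symm
    _ ≤ #(E.image f) := card_le_card fun x hx => by
      obtain ⟨p, hp, rfl⟩ := mem_image.1 hx
      obtain ⟨e, he, hfe⟩ := h p hp
      exact mem_image.2 ⟨e, he, hfe⟩
    _ ≤ #E := card_image_le

namespace SMInst

section Augmenting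

variable {α β : Type} {M N : Finset (α × β)}

def NoAugmentingEdge (M N : Finset (α × β)) : Prop :=
  ∀ p ∈ N, ¬ (mSingle M p.1 ∧ wSingle M p.2)

/-- No `M`-augmenting path `q.1 – e.2 – e.1 – p.2` alternates between edges `q ∈ N`, `e ∈ M`,
`p ∈ N`. -/
def NoAugmentingPath3 (M N : Finset (α × β)) : Prop :=
  ∀ e ∈ M, ∀ p ∈ N, ∀ q ∈ N, e.1 = p.1 → e.2 = q.2 → ¬ (wSingle M p.2 ∧ mSingle M q.1)

lemma exists_mem_of_not_mSingle {m : α} (h : ¬ mSingle M m) : ∃ e ∈ M, e.1 = m := by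
  simp only [mSingle, not_forall, not_not] at h
  obtain ⟨w, hw⟩ := h
  exact ⟨(m, w), hw, rfl⟩

lemma exists_mem_of_not_wSingle {w : β} (h : ¬ wSingle M w) : ∃ e ∈ M, e.2 = w := by
  simp only [wSingle, not_forall, not_not] at h
  obtain ⟨m, hm⟩ := h
  exact ⟨(m, w), hm, rfl⟩

lemma card_le_of_forall_not_mSingle {S : Finset (α × β)}
    (hS : Set.InjOn Prod.fst (S : Set (α × β))) (h : ∀ p ∈ S, ¬ mSingle M p.1) : #S ≤ #M := by
  classical
  exact card_le_card_of_injOn_of_forall_exists Prod.fst hS fun p hp =>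
    exists_mem_of_not_mSingle (h p hp)

lemma card_le_of_forall_not_wSingle {S : Finset (α × β)}
    (hS : Set.InjOn Prod.snd (S : Set (α × β))) (h : ∀ p ∈ S, ¬ wSingle M p.2) : #S ≤ #M := by
  classical
  exact card_le_card_of_injOn_of_forall_exists Prod.snd hS fun p hp =>
    exists_mem_of_not_wSingle (h p hp)

/-- Without augmenting paths of length three, no edge of `M` meets both an edge of `S` and
an edge of `T`. -/
lemma card_add_card_le_of_one_end_single {S T : Finset (α × β)}
    (hfst : Set.InjOn Prod.fst (S : Set (α × β))) (hsnd : Set.InjOn Prod.snd (T : Set (α × β)))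
    (hS : ∀ p ∈ S, p ∈ N ∧ ¬ mSingle M p.1 ∧ wSingle M p.2)
    (hT : ∀ q ∈ T, q ∈ N ∧ mSingle M q.1 ∧ ¬ wSingle M q.2) (hpath : NoAugmentingPath3 M N) :
    #S + #T ≤ #M := by
  classical
  set ES := M.filter fun e => ∃ p ∈ S, p.1 = e.1
  set ET := M.filter fun e => ∃ q ∈ T, q.2 = e.2
  have hES : #S ≤ #ES := card_le_card_of_injOn_of_forall_exists Prod.fst hfst fun p hp => by
    obtain ⟨e, he, hep⟩ := exists_mem_of_not_mSingle (hS p hp).2.1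
    exact ⟨e, mem_filter.2 ⟨he, p, hp, hep.symm⟩, hep⟩
  have hET : #T ≤ #ET := card_le_card_of_injOn_of_forall_exists Prod.snd hsnd fun q hq => by
    obtain ⟨e, he, heq⟩ := exists_mem_of_not_wSingle (hT q hq).2.2
    exact ⟨e, mem_filter.2 ⟨he, q, hq, heq.symm⟩, heq⟩
  have hdisj : Disjoint ES ET := by
    refine disjoint_filter.2 fun e he ⟨p, hp, hpe⟩ ⟨q, hq, hqe⟩ => ?_
    obtain ⟨hpN, -, hpw⟩ := hS p hp
    obtain ⟨hqN, hqm, -⟩ := hT q hq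
    exact hpath e he p hpN q hqN hpe.symm hqe.symm ⟨hpw, hqm⟩
  calc #S + #T ≤ #ES + #ET := add_le_add hES hET
    _ = #(ES ∪ ET) := (card_union_of_disjoint hdisj).symm
    _ ≤ #M := card_le_card (union_subset (filter_subset _ _) (filter_subset _ _))

theorem two_mul_card_le_three_mul_card (hfst : Set.InjOn Prod.fst (N : Set (α × β)))
    (hsnd : Set.InjOn Prod.snd (N : Set (α × β))) (hedge : NoAugmentingEdge M N)
    (hpath : NoAugmentingPath3 M N) :
    2 * #N ≤ 3 * #M := by
  classical
  set A := N.filter fun p => ¬ mSingle M p.1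
  set B := N.filter fun p => ¬ wSingle M p.2
  have hAB : A ∪ B = N := by
    rw [← filter_or]
    exact filter_true_of_mem fun p hp => not_and_or.1 (hedge p hp)
  have hA : #A ≤ #M :=
    card_le_of_forall_not_mSingle (hfst.mono (coe_subset.2 (filter_subset _ _))) (by simp [A])
  have hB : #B ≤ #M :=
    card_le_of_forall_not_wSingle (hsnd.mono (coe_subset.2 (filter_subset _ _))) (by simp [B])
  have hunion : #N + #(A ∩ B) = #A + #B := hAB ▸ card_union_add_card_inter A B
  have hA' : #(A \ B) + #(A ∩ B) = #A := card_sdiff_add_card_inter A B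
  have hB' : #(B \ A) + #(A ∩ B) = #B := inter_comm A B ▸ card_sdiff_add_card_inter B A
  have hsdiff : #(A \ B) + #(B \ A) ≤ #M := by
    refine card_add_card_le_of_one_end_single (hfst.mono ?_) (hsnd.mono ?_) ?_ ?_ hpath <;>
      simp +contextual [A, B, Set.subset_def]
  omega

end Augmenting

end SMInst

namespace SMInst

lemma WStrict.wPref_of_not_wPref {α β : Type} {I : SMInst α β} (hI : I.WStrict) {w : β}
    {m m' : α} (hm : I.wAcc w m) (hm' : I.wAcc w m') (hne : m ≠ m') (h : ¬ I.wPref w m' m) :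
    I.wPref w m m' := by
  obtain ⟨r, hr⟩ := Option.isSome_iff_exists.1 hm
  obtain ⟨r', hr'⟩ := Option.isSome_iff_exists.1 hm'
  refine ⟨r, r', hr, hr', lt_of_le_of_ne (not_lt.1 fun hlt => h ⟨r', r, hr', hr, hlt⟩) ?_⟩
  rintro rfl
  exact hne (hI w m m' (hr.trans hr'.symm) hm)

variable {n : ℕ} {I : SMInst (Fin n) (Fin n)} {M' : Finset ((Fin n ⊕ Fin n) × (Fin n ⊕ Fin n))}
  {i j k : Fin n}

@[simp]
lemma translate_mAcc_inl_inl : (translate I).mAcc (inl i) (inl j) ↔ I.mAcc i j := by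
  simp [translate, mAcc]

@[simp]
lemma translate_mAcc_inl_inr : (translate I).mAcc (inl i) (inr j) ↔ I.mAcc i j := by
  simp [translate, mAcc]

@[simp]
lemma translate_mAcc_inr_inl : (translate I).mAcc (inr k) (inl j) ↔ j = k := by
  simp [translate, mAcc]

@[simp]
lemma translate_mAcc_inr_inr : (translate I).mAcc (inr k) (inr j) ↔ j = k := by
  simp [translate, mAcc]

@[simp]
lemma translate_wAcc_inr_inl : (translate I).wAcc (inr j) (inl i) ↔ I.wAcc j i := by
  simp [translate, wAcc]

@[simp]
lemma translate_wAcc_inl_inr : (translate I).wAcc (inl j) (inr k) ↔ k = j := by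
  simp [translate, wAcc]

@[simp]
lemma translate_wAcc_inr_inr_s16 : (translate I).wAcc (inr j) (inr k) ↔ k = j := by
  simp [translate, wAcc]

lemma translate_mPref_inr_inl_inr : (translate I).mPref (inr j) (inl j) (inr j) :=
  ⟨0, 1, by simp [translate], by simp [translate], one_pos⟩

lemma translate_wPref_inl_inl_inr (h : I.wAcc j i) :
    (translate I).wPref (inl j) (inl i) (inr j) := by
  obtain ⟨r, hr⟩ := Option.isSome_iff_exists.1 h
  refine ⟨r, (univ.sup fun i' => (I.wpref j i').getD 0) + 1, hr, by simp [translate],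
    Nat.lt_succ_of_le ?_⟩
  simpa [hr] using le_sup (f := fun i' => (I.wpref j i').getD 0) (mem_univ i)

lemma translate_wPref_inr_inr_inl (h : I.wAcc j i) :
    (translate I).wPref (inr j) (inr j) (inl i) := by
  obtain ⟨r, hr⟩ := Option.isSome_iff_exists.1 h
  exact ⟨0, r + 1, by simp [translate], by simp [translate, hr], r.succ_pos⟩

/-- `a_i` ranks `t_k` above `s_j` as soon as `m_i` does not rank `w_j` above `w_k`: the `t`-copies
of a tie precede all its `s`-copies. -/
lemma mPref_of_not_translate_mPref (hj : I.mAcc i j) (hj₀ : I.mAcc i k)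
    (h : ¬ (translate I).mPref (inl i) (inr k) (inl j)) : I.mPref i j k := by
  obtain ⟨r, hr⟩ := Option.isSome_iff_exists.1 hj
  obtain ⟨r₀, hr₀⟩ := Option.isSome_iff_exists.1 hj₀
  set c₀ := #(univ.filter fun j' : Fin n => I.mpref i j' = some r₀ ∧ j' < k)
  set c := #(univ.filter fun j' : Fin n => I.mpref i j' = some r ∧ j' < j)
  refine ⟨r, r₀, hr, hr₀, not_le.1 fun hle => h ⟨2 * n * r₀ + c₀, 2 * n * r + n + c,
    by simp [translate, hr₀, c₀], by simp [translate, hr, c], ?_⟩⟩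
  have hc : c₀ < n := by
    simpa using card_lt_card (filter_ssubset.2 ⟨k, mem_univ k, by simp⟩)
  have : 2 * n * r₀ ≤ 2 * n * r := Nat.mul_le_mul_left _ hle
  omega

lemma mem_projectM {p : Fin n × Fin n} :
    p ∈ projectM M' ↔ (inl p.1, inl p.2) ∈ M' ∨ (inl p.1, inr p.2) ∈ M' := by
  simp [projectM]

lemma mSingle_inl_of_mSingle_projectM (h : mSingle (projectM M') i) : mSingle M' (inl i) := by
  rintro (j | j) hj
  · exact h j (mem_projectM.2 (Or.inl hj))
  · exact h j (mem_projectM.2 (Or.inr hj))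

variable (hM' : (translate I).IsStable M')
include hM'

lemma mem_inr_inl_of_mem_inl_inr (h : (inl i, inr j) ∈ M') : (inr j, inl j) ∈ M' := by
  by_contra hbs
  refine hM'.2 (inr j) (inr j) ⟨by simp, by simp, Or.inl ?_,
    Or.inr ⟨inl i, h, translate_wPref_inr_inr_inl (translate_wAcc_inr_inl.1 (hM'.1.1 _ h).2)⟩⟩
  rintro (k | k) hk
  · obtain rfl := translate_mAcc_inr_inl.1 (hM'.1.1 _ hk).1
    exact hbs hk
  · obtain rfl := translate_mAcc_inr_inr.1 (hM'.1.1 _ hk).1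
    exact inr_ne_inl (congrArg Prod.fst (hM'.1.2.2 _ hk _ h rfl))

/-- If `w_j` is single in the projection, `b_j` is matched to `s_j`, which leaves `t_j` single. -/
lemma wSingle_inr_of_wSingle_projectM (h : wSingle (projectM M') j) : wSingle M' (inr j) := by
  have hs : ∀ i, (inl i, inl j) ∉ M' := fun i hi => h i (mem_projectM.2 (Or.inl hi))
  have ht : ∀ i, (inl i, inr j) ∉ M' := fun i hi => h i (mem_projectM.2 (Or.inr hi))
  have hbs : (inr j, inl j) ∈ M' := by
    by_contra hbs
    refine hM'.2 (inr j) (inl j) ⟨by simp, by simp, ?_, Or.inl ?_⟩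
    · by_cases hbt : (inr j, inr j) ∈ M'
      · exact Or.inr ⟨inr j, hbt, translate_mPref_inr_inl_inr⟩
      · refine Or.inl ?_
        rintro (k | k) hk
        · obtain rfl := translate_mAcc_inr_inl.1 (hM'.1.1 _ hk).1
          exact hbs hk
        · obtain rfl := translate_mAcc_inr_inr.1 (hM'.1.1 _ hk).1
          exact hbt hk
    · rintro (i | k) hk
      · exact hs i hk
      · obtain rfl := translate_mAcc_inr_inl.1 (hM'.1.1 _ hk).1
        exact hbs hk
  rintro (i | k) hk
  · exact ht i hk
  · obtain rfl := translate_mAcc_inr_inr.1 (hM'.1.1 _ hk).1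
    exact inr_ne_inl (congrArg Prod.snd (hM'.1.2.1 _ hk _ hbs rfl))

lemma noAugmentingEdge_projectM {N : Finset (Fin n × Fin n)} (hN : I.IsMatching N) :
    NoAugmentingEdge (projectM M') N := fun p hp ⟨hi, hj⟩ =>
  hM'.2 (inl p.1) (inr p.2) ⟨translate_mAcc_inl_inr.2 (hN.1 p hp).1,
    translate_wAcc_inr_inl.2 (hN.1 p hp).2, Or.inl (mSingle_inl_of_mSingle_projectM hi),
    Or.inl (wSingle_inr_of_wSingle_projectM hM' hj)⟩

lemma noAugmentingPath3_projectM (h1tm : I.OneTM) {N : Finset (Fin n × Fin n)}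
    (hN : I.IsStable N) : NoAugmentingPath3 (projectM M') N := by
  rintro ⟨i, j⟩ he ⟨_, j₀⟩ hp ⟨i', _⟩ hq rfl rfl ⟨hj₀, hi'⟩
  have ha' := mSingle_inl_of_mSingle_projectM hi'
  have hp_acc := hN.1.1 _ hp
  have hq_acc := hN.1.1 _ hq
  have hs : (inl i, inl j) ∈ M' := by
    refine (mem_projectM.1 he).resolve_right fun ht => hM'.2 (inl i') (inl j)
      ⟨translate_mAcc_inl_inl.2 hq_acc.1, hq_acc.2, Or.inl ha', Or.inr ⟨inr j,
        mem_inr_inl_of_mem_inl_inr hM' ht, translate_wPref_inl_inl_inr hq_acc.2⟩⟩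
  have hs_acc := hM'.1.1 _ hs
  have hw : I.wPref j i i' := h1tm.wPref_of_not_wPref hs_acc.2 hq_acc.2
    (fun hii' => ha' (inl j) (hii' ▸ hs))
    (fun hpref => hM'.2 (inl i') (inl j)
      ⟨translate_mAcc_inl_inl.2 hq_acc.1, hq_acc.2, Or.inl ha', Or.inr ⟨inl i, hs, hpref⟩⟩)
  have hm : I.mPref i j j₀ := mPref_of_not_translate_mPref (translate_mAcc_inl_inl.1 hs_acc.1)
    hp_acc.1 fun hpref => hM'.2 (inl i) (inr j₀)
      ⟨translate_mAcc_inl_inr.2 hp_acc.1, translate_wAcc_inr_inl.2 hp_acc.2,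
        Or.inr ⟨inl j, hs, hpref⟩, Or.inl (wSingle_inr_of_wSingle_projectM hM' hj₀)⟩
  exact hN.2 i j ⟨translate_mAcc_inl_inl.1 hs_acc.1, hs_acc.2, Or.inr ⟨j₀, hp, hm⟩,
    Or.inr ⟨i', hq, hw⟩⟩

end SMInst

/-- The projected matching is a 1.5-approximation: if `M'` is a stable matching of the
translated instance, then its projection `M` satisfies `3|M| ≥ 2|N|` for every
(weakly) stable matching `N` of `I` (in particular `|M_opt|/|M| ≤ 1.5` for a
maximum-size stable matching `M_opt`). -/
theorem projection_is_one_point_five_approx {n : ℕ}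
    (I : SMInst (Fin n) (Fin n)) (h1tm : I.OneTM)
    (M' : Finset ((Fin n ⊕ Fin n) × (Fin n ⊕ Fin n)))
    (hM' : (SMInst.translate I).IsStable M')
    (N : Finset (Fin n × Fin n)) (hN : I.IsStable N) :
    2 * N.card ≤ 3 * (SMInst.projectM M').card :=
  SMInst.two_mul_card_le_three_mul_card hN.1.2.1 hN.1.2.2
    (SMInst.noAugmentingEdge_projectM hM' hN.1) (SMInst.noAugmentingPath3_projectM hM' h1tm hN)
end

section
/- A combinatorial counting lemma for unions of matchings: let M and N be matchings on the same bipartite vertex set of men and women, and consider the multigraph G whose edge multiset is the disjoint union of M and N (so each pair in both M and N contributes two parallel edges, forming a cycle of length two). If (i) no connected component of G consists of a single N-edge, and (ii) no connected component of G is a path of length three whose two end edges belong to N and whose middle edge belongs to M, then |N| ≤ (3/2)·|M|. -/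
/-!
Let `A` and `B` be the `N`-edges whose man, resp. woman, is matched in `M`; condition (i) says
`A ∪ B = N`. Sending an edge of `A` to the `M`-edge at its man is injective since `N` is a
matching, so `|A| ≤ |M|`, and likewise `|B| ≤ |M|`. Send the edges of `A \ B` to the `M`-edge
at their man and those of `B \ A` to the `M`-edge at their woman: an `M`-edge hit from both
sides would be the middle edge of a forbidden path `N`–`M`–`N`, so by (ii)
`|A \ B| + |B \ A| ≤ |M|`. Hence `2|N| = (|A \ B| + |B|) + (|B \ A| + |A|) ≤ 3|M|`.
-/

open Finset

theorem Finset.card_le_card_of_injOn_of_image_subset {ι κ : Type*} [DecidableEq κ] {f : ι → κ}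
    {s t : Finset ι} (hf : Set.InjOn f s) (h : s.image f ⊆ t.image f) : #s ≤ #t :=
  calc #s = #(s.image f) := (card_image_of_injOn hf).symm
    _ ≤ #(t.image f) := card_le_card h
    _ ≤ #t := card_image_le

section MatchingUnion

variable {α β : Type*} (M N : Finset (α × β))

def manMatched [DecidableEq α] : Finset (α × β) := N.filter (·.1 ∈ M.image Prod.fst)

def womanMatched [DecidableEq β] : Finset (α × β) := N.filter (·.2 ∈ M.image Prod.snd)

variable {M N}

@[simp]
theorem mem_manMatched [DecidableEq α] {p : α × β} :
    p ∈ manMatched M N ↔ p ∈ N ∧ ∃ w, (p.1, w) ∈ M := by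
  simp [manMatched]

@[simp]
theorem mem_womanMatched [DecidableEq β] {p : α × β} :
    p ∈ womanMatched M N ↔ p ∈ N ∧ ∃ m, (m, p.2) ∈ M := by
  simp [womanMatched]

theorem card_le_card_filter_fst_mem_image [DecidableEq α] {S : Finset (α × β)}
    (hS : Set.InjOn Prod.fst (S : Set (α × β))) (hSM : ∀ p ∈ S, ∃ w, (p.1, w) ∈ M) :
    #S ≤ #(M.filter (·.1 ∈ S.image Prod.fst)) :=
  card_le_card_of_injOn_of_image_subset hS <| by
    simp only [subset_iff, mem_image, mem_filter]
    rintro _ ⟨p, hp, rfl⟩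
    obtain ⟨w, hw⟩ := hSM p hp
    exact ⟨(p.1, w), ⟨hw, p, hp, rfl⟩, rfl⟩

theorem card_le_card_filter_snd_mem_image [DecidableEq β] {S : Finset (α × β)}
    (hS : Set.InjOn Prod.snd (S : Set (α × β))) (hSM : ∀ p ∈ S, ∃ m, (m, p.2) ∈ M) :
    #S ≤ #(M.filter (·.2 ∈ S.image Prod.snd)) :=
  card_le_card_of_injOn_of_image_subset hS <| by
    simp only [subset_iff, mem_image, mem_filter]
    rintro _ ⟨p, hp, rfl⟩
    obtain ⟨m, hm⟩ := hSM p hp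
    exact ⟨(m, p.2), ⟨hm, p, hp, rfl⟩, rfl⟩

theorem card_manMatched_le [DecidableEq α] (hN : Set.InjOn Prod.fst (N : Set (α × β))) :
    #(manMatched M N) ≤ #M :=
  (card_le_card_filter_fst_mem_image (hN.mono (filter_subset _ _))
    fun _ hp => (mem_manMatched.1 hp).2).trans (card_filter_le _ _)

theorem card_womanMatched_le [DecidableEq β] (hN : Set.InjOn Prod.snd (N : Set (α × β))) :
    #(womanMatched M N) ≤ #M :=
  (card_le_card_filter_snd_mem_image (hN.mono (filter_subset _ _))
    fun _ hp => (mem_womanMatched.1 hp).2).trans (card_filter_le _ _)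

theorem manMatched_union_womanMatched [DecidableEq α] [DecidableEq β]
    (hcover : ∀ p ∈ N, (∃ w', (p.1, w') ∈ M) ∨ (∃ m', (m', p.2) ∈ M)) :
    manMatched M N ∪ womanMatched M N = N := by
  ext p
  simp only [mem_union, mem_manMatched, mem_womanMatched]
  exact ⟨fun h => h.elim And.left And.left, fun hp => (hcover p hp).imp (⟨hp, ·⟩) (⟨hp, ·⟩)⟩

theorem mk_fst_snd_notMem_of_mem_sdiff [DecidableEq α] [DecidableEq β]
    (hpath : ¬ ∃ (mi mk : α) (wj wl : β),
        (mi, wj) ∈ N ∧ (mk, wl) ∈ N ∧ (mk, wj) ∈ M ∧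
        (∀ w, (mi, w) ∉ M) ∧ (∀ m, (m, wl) ∉ M))
    {p q : α × β} (hp : p ∈ manMatched M N \ womanMatched M N)
    (hq : q ∈ womanMatched M N \ manMatched M N) : (p.1, q.2) ∉ M := by
  simp only [mem_sdiff, mem_manMatched, mem_womanMatched, not_and, not_exists] at hp hq
  exact fun hpq => hpath ⟨q.1, p.1, q.2, p.2, hq.1.1, hp.1.1, hpq, hq.2 hq.1.1, hp.2 hp.1.1⟩

theorem card_sdiff_add_card_sdiff_le [DecidableEq α] [DecidableEq β]
    (hN1 : Set.InjOn Prod.fst (N : Set (α × β))) (hN2 : Set.InjOn Prod.snd (N : Set (α × β)))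
    (hpath : ¬ ∃ (mi mk : α) (wj wl : β),
        (mi, wj) ∈ N ∧ (mk, wl) ∈ N ∧ (mk, wj) ∈ M ∧
        (∀ w, (mi, w) ∉ M) ∧ (∀ m, (m, wl) ∉ M)) :
    #(manMatched M N \ womanMatched M N) + #(womanMatched M N \ manMatched M N) ≤ #M := by
  set A := manMatched M N \ womanMatched M N
  set B := womanMatched M N \ manMatched M N
  set MA := M.filter (·.1 ∈ A.image Prod.fst)
  set MB := M.filter (·.2 ∈ B.image Prod.snd)
  have hA : #A ≤ #MA :=
    card_le_card_filter_fst_mem_image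
      (hN1.mono (coe_subset.2 (sdiff_subset.trans (filter_subset _ _))))
      fun _ hp => (mem_manMatched.1 (mem_sdiff.1 hp).1).2
  have hB : #B ≤ #MB :=
    card_le_card_filter_snd_mem_image
      (hN2.mono (coe_subset.2 (sdiff_subset.trans (filter_subset _ _))))
      fun _ hp => (mem_womanMatched.1 (mem_sdiff.1 hp).1).2
  have hdisj : Disjoint MA MB := by
    refine disjoint_filter.2 fun e he hpe hqe => ?_
    obtain ⟨p, hp, hpe⟩ := mem_image.1 hpe
    obtain ⟨q, hq, hqe⟩ := mem_image.1 hqe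
    exact mk_fst_snd_notMem_of_mem_sdiff hpath hp hq (by rwa [hpe, hqe])
  calc #A + #B ≤ #MA + #MB := add_le_add hA hB
    _ = #(MA ∪ MB) := (card_union_of_disjoint hdisj).symm
    _ ≤ #M := card_le_card (union_subset (filter_subset _ _) (filter_subset _ _))

end MatchingUnion

theorem union_of_matchings_counting_general {α β : Type} (M N : Finset (α × β))
    (hN1 : ∀ p ∈ N, ∀ q ∈ N, p.1 = q.1 → p = q)
    (hN2 : ∀ p ∈ N, ∀ q ∈ N, p.2 = q.2 → p = q)
    (hsingle : ∀ p ∈ N, (∃ w', (p.1, w') ∈ M) ∨ (∃ m', (m', p.2) ∈ M))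
    (hpath : ¬ ∃ (mi mk : α) (wj wl : β),
        (mi, wj) ∈ N ∧ (mk, wl) ∈ N ∧ (mk, wj) ∈ M ∧
        (∀ w, (mi, w) ∉ M) ∧ (∀ m, (m, wl) ∉ M)) :
    2 * N.card ≤ 3 * M.card := by
  classical
  set A := manMatched M N
  set B := womanMatched M N
  calc 2 * #N = (#(A \ B) + #(B \ A)) + #B + #A := by
        have hAB := card_sdiff_add_card A B
        have hBA := card_sdiff_add_card B A
        rw [manMatched_union_womanMatched hsingle] at hAB
        rw [union_comm, manMatched_union_womanMatched hsingle] at hBA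
        omega
    _ ≤ #M + #M + #M :=
      add_le_add (add_le_add (card_sdiff_add_card_sdiff_le hN1 hN2 hpath)
        (card_womanMatched_le hN2)) (card_manMatched_le hN1)
    _ = 3 * #M := by ring

/-- Counting lemma for unions of matchings: if `M` and `N` are matchings on the same
bipartite vertex set such that (i) no connected component of the multigraph `M ⊎ N`
is a single `N`-edge (i.e. every `N`-pair has an endpoint matched in `M`), and
(ii) no connected component is a length-three path whose end edges are `N`-edges and
whose middle edge is an `M`-edge, then `|N| ≤ (3/2)·|M|`. -/
theorem union_of_matchings_counting {α β : Type} (M N : Finset (α × β))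
    (hM1 : ∀ p ∈ M, ∀ q ∈ M, p.1 = q.1 → p = q)
    (hM2 : ∀ p ∈ M, ∀ q ∈ M, p.2 = q.2 → p = q)
    (hN1 : ∀ p ∈ N, ∀ q ∈ N, p.1 = q.1 → p = q)
    (hN2 : ∀ p ∈ N, ∀ q ∈ N, p.2 = q.2 → p = q)
    (hsingle : ∀ p ∈ N, (∃ w', (p.1, w') ∈ M) ∨ (∃ m', (m', p.2) ∈ M))
    (hpath : ¬ ∃ (mi mk : α) (wj wl : β),
        (mi, wj) ∈ N ∧ (mk, wl) ∈ N ∧ (mk, wj) ∈ M ∧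
        (∀ w, (mi, w) ∉ M) ∧ (∀ m, (m, wl) ∉ M)) :
    2 * N.card ≤ 3 * M.card :=
  union_of_matchings_counting_general M N hN1 hN2 hsingle hpath
end

section
/- MAX SMTI admits a 2-approximate-stable mechanism that is man-strategy-proof against coalitions: there exists a mechanism S such that for every SMTI instance I, S(I) is a stable matching with 2·|S(I)| ≥ |M_opt| for every stable matching M_opt of I, and no nonempty coalition C of men has a successful strategy, i.e., there is no instance I' differing from I only in the preference lists of the members of C such that every member of C prefers S(I') to S(I) with respect to his list in I. -/
/-!
Break every tie by index and run men-proposing deferred acceptance on the resulting strict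
instance. Breaking ties only adds strict preferences, so the outcome is stable for the original
instance; a stable matching is maximal, hence at least half as large as any matching.

A coalition whose members all gain in the original instance also all gain in the tie-broken one.
By the blocking lemma of Gale and Sotomayor, a matching that some men prefer to the deferred
acceptance outcome is blocked by a pair whose man does not prefer it. Applied to the manipulated
outcome, this pair involves no member of the coalition, so it blocks the manipulated outcome under
the reported lists as well, contradicting its stability (Dubins–Freedman).
-/

/-- `I.mPref m` and `I.wPref w` unfold to `RankLT (I.mpref m)` and `RankLT (I.wpref w)`. -/
def RankLT {γ : Type} (f : γ → Option ℕ) (x y : γ) : Prop :=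
  ∃ r r', f x = some r ∧ f y = some r' ∧ r < r'

namespace RankLT

variable {γ : Type} {f : γ → Option ℕ} {x y z : γ}

theorem irrefl (x : γ) : ¬ RankLT f x x := by
  rintro ⟨r, r', h, h', hlt⟩
  cases h.symm.trans h'
  exact lt_irrefl r hlt

theorem asymm (h : RankLT f x y) (h' : RankLT f y x) : False := by
  obtain ⟨r, r', hx, hy, hlt⟩ := h
  obtain ⟨s, s', hy', hx', hlt'⟩ := h'
  cases hx.symm.trans hx'
  cases hy.symm.trans hy'
  exact lt_asymm hlt hlt'

theorem trans (h : RankLT f x y) (h' : RankLT f y z) : RankLT f x z := by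
  obtain ⟨r, r', hx, hy, hlt⟩ := h
  obtain ⟨s, s', hy', hz, hlt'⟩ := h'
  cases hy.symm.trans hy'
  exact ⟨r, s', hx, hz, hlt.trans hlt'⟩

theorem of_not_rankLT (h : RankLT f x y) (h' : ¬ RankLT f z y) (hz : (f z).isSome) :
    RankLT f x z := by
  obtain ⟨r, r', hx, hy, hlt⟩ := h
  obtain ⟨s, hs⟩ := Option.isSome_iff_exists.1 hz
  exact ⟨r, s, hx, hs, lt_of_lt_of_le hlt (not_lt.1 fun hlt' => h' ⟨s, r', hs, hy, hlt'⟩)⟩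

theorem total (hf : ∀ x y, f x = f y → (f x).isSome → x = y)
    (hx : (f x).isSome) (hy : (f y).isSome) (hne : x ≠ y) : RankLT f x y ∨ RankLT f y x := by
  obtain ⟨r, hr⟩ := Option.isSome_iff_exists.1 hx
  obtain ⟨s, hs⟩ := Option.isSome_iff_exists.1 hy
  rcases lt_trichotomy r s with hlt | rfl | hlt
  · exact Or.inl ⟨r, s, hr, hs, hlt⟩
  · exact absurd (hf x y (hr.trans hs.symm) hx) hne
  · exact Or.inr ⟨s, r, hs, hr, hlt⟩

end RankLT

def breakTiesByIndex {l : ℕ} (f : Fin l → Option ℕ) (x : Fin l) : Option ℕ :=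
  (f x).map (· * l + x)

section TieBreaking

variable {l : ℕ} {f : Fin l → Option ℕ} {x y : Fin l}

theorem isSome_breakTiesByIndex : (breakTiesByIndex f x).isSome = (f x).isSome := by
  simp [breakTiesByIndex]

theorem Fin.mul_add_lt_mul_add_of_lt {r r' : ℕ} (h : r < r') (x y : Fin l) :
    r * l + x < r' * l + y :=
  calc r * l + x < (r + 1) * l := by rw [add_mul, one_mul]; exact Nat.add_lt_add_left x.isLt _
    _ ≤ r' * l + y := (Nat.mul_le_mul_right l h).trans (Nat.le_add_right _ _)

theorem RankLT.breakTiesByIndex (h : RankLT f x y) : RankLT (breakTiesByIndex f) x y := by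
  obtain ⟨r, r', hx, hy, hlt⟩ := h
  exact ⟨_, _, by simp [_root_.breakTiesByIndex, hx], by simp [_root_.breakTiesByIndex, hy],
    Fin.mul_add_lt_mul_add_of_lt hlt x y⟩

theorem breakTiesByIndex_injective (h : breakTiesByIndex f x = breakTiesByIndex f y)
    (hx : (breakTiesByIndex f x).isSome) : x = y := by
  obtain ⟨r, hr⟩ := Option.isSome_iff_exists.1 (isSome_breakTiesByIndex ▸ hx)
  obtain ⟨r', hr'⟩ := Option.isSome_iff_exists.1
    (isSome_breakTiesByIndex.symm.trans (h ▸ hx : (breakTiesByIndex f y).isSome))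
  simp only [breakTiesByIndex, hr, hr', Option.map_some, Option.some.injEq] at h
  rcases lt_trichotomy r r' with hlt | rfl | hlt
  · exact absurd h (Fin.mul_add_lt_mul_add_of_lt hlt x y).ne
  · exact Fin.ext (Nat.add_left_cancel h)
  · exact absurd h (Fin.mul_add_lt_mul_add_of_lt hlt y x).ne'

end TieBreaking

theorem Finset.card_filter_mem_image_le {γ δ ε : Type} [DecidableEq δ]
    {s : Finset γ} {t : Finset ε} {f : γ → δ} {g : ε → δ} (hf : Set.InjOn f s) :
    (s.filter fun x => f x ∈ t.image g).card ≤ t.card := by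
  refine (Finset.card_le_card_of_injOn (t := t.image g) f (fun x hx => ?_) (hf.mono ?_)).trans
    Finset.card_image_le
  · exact (Finset.mem_filter.1 hx).2
  · exact fun x hx => (Finset.mem_filter.1 hx).1

namespace SMInst

open scoped Classical

section Matchings

variable {α β : Type} {I J J' : SMInst α β} {M M' N : Finset (α × β)} {B : Finset α}
  {m m' : α} {w w' : β}

theorem not_mSingle_iff : ¬ mSingle M m ↔ ∃ w, (m, w) ∈ M := by
  simp [mSingle]

theorem not_wSingle_iff : ¬ wSingle M w ↔ ∃ m, (m, w) ∈ M := by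
  simp [wSingle]

namespace IsMatching

theorem mAcc_of_mem (hM : I.IsMatching M) (h : (m, w) ∈ M) : I.mAcc m w := (hM.1 _ h).1

theorem wAcc_of_mem (hM : I.IsMatching M) (h : (m, w) ∈ M) : I.wAcc w m := (hM.1 _ h).2

theorem injOn_fst (hM : I.IsMatching M) : Set.InjOn Prod.fst (M : Set (α × β)) :=
  fun p hp q hq h => hM.2.1 p hp q hq h

theorem injOn_snd (hM : I.IsMatching M) : Set.InjOn Prod.snd (M : Set (α × β)) :=
  fun p hp q hq h => hM.2.2 p hp q hq h

theorem snd_eq (hM : I.IsMatching M) (h : (m, w) ∈ M) (h' : (m, w') ∈ M) : w = w' :=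
  congrArg Prod.snd (hM.injOn_fst h h' rfl)

theorem fst_eq (hM : I.IsMatching M) (h : (m, w) ∈ M) (h' : (m', w) ∈ M) : m = m' :=
  congrArg Prod.fst (hM.injOn_snd h h' rfl)

end IsMatching

theorem blocks_congr (hm : J.mpref m = J'.mpref m) (hw : J.wpref w = J'.wpref w) :
    J.Blocks M m w ↔ J'.Blocks M m w := by
  simp only [Blocks, mAcc, wAcc, mPref, wPref, hm, hw]

theorem Refines.mPrefMatching (h : I.Refines J) (hm : I.mPrefMatching m M' M) :
    J.mPrefMatching m M' M := by
  obtain ⟨w, hw, hacc, hsingle | ⟨w', hw', hpref⟩⟩ := hm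
  · exact ⟨w, hw, (h.1 m w).1 hacc, Or.inl hsingle⟩
  · exact ⟨w, hw, (h.1 m w).1 hacc, Or.inr ⟨w', hw', h.2.2.1 m w w' hpref⟩⟩

theorem Refines.blocks (h : I.Refines J) (hb : I.Blocks M m w) : J.Blocks M m w := by
  obtain ⟨hmw, hwm, hm, hw⟩ := hb
  refine ⟨(h.1 m w).1 hmw, (h.2.1 w m).1 hwm, hm.imp_right ?_, hw.imp_right ?_⟩
  · exact fun ⟨w', hw', hpref⟩ => ⟨w', hw', h.2.2.1 m w w' hpref⟩
  · exact fun ⟨m', hm', hpref⟩ => ⟨m', hm', h.2.2.2 w m m' hpref⟩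

theorem Refines.isStable (h : I.Refines J) (hM : J.IsStable M) : I.IsStable M := by
  obtain ⟨⟨hacc, hfst, hsnd⟩, hblock⟩ := hM
  refine ⟨⟨fun p hp => ?_, hfst, hsnd⟩, fun m w hb => hblock m w (h.blocks hb)⟩
  exact ⟨(h.1 _ _).2 (hacc p hp).1, (h.2.1 _ _).2 (hacc p hp).2⟩

/-- A stable matching is maximal. -/
theorem IsStable.card_le_two_mul (hM : I.IsStable M) (hN : I.IsMatching N) :
    N.card ≤ 2 * M.card := by
  have hcover : N = (N.filter fun p => p.1 ∈ M.image Prod.fst) ∪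
      (N.filter fun p => p.2 ∈ M.image Prod.snd) := by
    ext p
    simp only [Finset.mem_union, Finset.mem_filter, Finset.mem_image]
    refine ⟨fun hp => ?_, by tauto⟩
    by_contra! hfree
    refine hM.2 p.1 p.2 ⟨hN.mAcc_of_mem hp, hN.wAcc_of_mem hp, Or.inl ?_, Or.inl ?_⟩
    · exact fun w hw => (hfree.1 hp) _ hw rfl
    · exact fun m hm => (hfree.2 hp) _ hm rfl
  calc N.card ≤ _ + _ := hcover ▸ Finset.card_union_le _ _
    _ ≤ M.card + M.card := add_le_add (Finset.card_filter_mem_image_le hN.injOn_fst)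
        (Finset.card_filter_mem_image_le hN.injOn_snd)
    _ = 2 * M.card := (two_mul _).symm

theorem not_mPrefMatching_of_mem (hM : J.IsMatching M) (hM' : J.IsMatching M')
    (h : (m, w) ∈ M) (h' : (m, w) ∈ M') : ¬ J.mPrefMatching m M' M := by
  rintro ⟨w₀, hw₀, -, hsingle | ⟨w₁, hw₁, hlt⟩⟩
  · exact hsingle w h
  · cases hM'.snd_eq h' hw₀
    cases hM.snd_eq h hw₁
    exact RankLT.irrefl _ hlt

theorem mSingle_or_mPref_of_not_mPrefMatching (hM' : J.IsMatching M')
    (hm : ¬ J.mPrefMatching m M' M)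
    (h : ∀ w₀ w₁, (m, w₀) ∈ M' → (m, w₁) ∈ M → ¬ J.mPref m w₀ w₁ → J.mPref m w w₀) :
    mSingle M' m ∨ ∃ w₀, (m, w₀) ∈ M' ∧ J.mPref m w w₀ := by
  refine or_iff_not_imp_left.2 fun hmatched => ?_
  obtain ⟨w₀, hw₀⟩ := not_mSingle_iff.1 hmatched
  have hworse : ¬ (mSingle M m ∨ ∃ w₁, (m, w₁) ∈ M ∧ J.mPref m w₀ w₁) :=
    fun h' => hm ⟨w₀, hw₀, hM'.mAcc_of_mem hw₀, h'⟩
  push Not at hworse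
  obtain ⟨w₁, hw₁⟩ := not_mSingle_iff.1 hworse.1
  exact ⟨w₀, hw₀, h w₀ w₁ hw₀ hw₁ (hworse.2 w₁ hw₁)⟩

/-- `w` is matched in `M` to a man `m₁` she prefers to `m`, and `m₁` blocks `M'` with her. -/
theorem exists_blocks_of_isStable (hJ : J.NoTies) (hM : J.IsStable M) (hM' : J.IsMatching M')
    (hpref : J.mPrefMatching m M' M) (hmw : (m, w) ∈ M')
    (hw : ∀ m₁, (m₁, w) ∈ M → ¬ J.mPrefMatching m₁ M' M) :
    ∃ m₁, ¬ J.mPrefMatching m₁ M' M ∧ J.Blocks M' m₁ w := by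
  obtain ⟨w₀, hw₀, hacc, hbetter⟩ := hpref
  cases hM'.snd_eq hmw hw₀
  have hwm := hM'.wAcc_of_mem hmw
  obtain ⟨m₁, hm₁⟩ := not_wSingle_iff.1 fun hsingle =>
    hM.2 m w ⟨hacc, hwm, hbetter, Or.inl hsingle⟩
  have hne : m ≠ m₁ := by
    rintro rfl
    exact not_mPrefMatching_of_mem hM.1 hM' hm₁ hmw ⟨w, hmw, hacc, hbetter⟩
  have hwpref : J.wPref w m₁ m :=
    (RankLT.total (hJ.2 w) (hM.1.wAcc_of_mem hm₁) hwm hne.symm).resolve_right fun hlt =>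
      hM.2 m w ⟨hacc, hwm, hbetter, Or.inr ⟨m₁, hm₁, hlt⟩⟩
  refine ⟨m₁, hw m₁ hm₁, hM.1.mAcc_of_mem hm₁, hM.1.wAcc_of_mem hm₁, ?_,
    Or.inr ⟨m, hmw, hwpref⟩⟩
  refine mSingle_or_mPref_of_not_mPrefMatching hM' (hw m₁ hm₁) fun w₀ w₁ hw₀ hw₁ hnot => ?_
  cases hM.1.snd_eq hm₁ hw₁
  have hw₀w : w₀ ≠ w := fun h => hne (hM'.fst_eq hmw (h ▸ hw₀))
  exact (RankLT.total (hJ.1 m₁) (hM.1.mAcc_of_mem hm₁) (hM'.mAcc_of_mem hw₀)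
    hw₀w.symm).resolve_right hnot

noncomputable def womenOf (M : Finset (α × β)) (B : Finset α) : Finset β :=
  (M.filter fun p => p.1 ∈ B).image Prod.snd

theorem mem_womenOf : w ∈ womenOf M B ↔ ∃ m ∈ B, (m, w) ∈ M := by
  simp [womenOf, and_comm]

theorem card_womenOf (hfst : Set.InjOn Prod.fst (M : Set (α × β)))
    (hsnd : Set.InjOn Prod.snd (M : Set (α × β))) :
    (womenOf M B).card = ((M.filter fun p => p.1 ∈ B).image Prod.fst).card := by
  have hsub : ((M.filter fun p => p.1 ∈ B : Finset (α × β)) : Set (α × β)) ⊆ M :=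
    Finset.coe_subset.2 (Finset.filter_subset _ _)
  rw [womenOf, Finset.card_image_of_injOn (hsnd.mono hsub),
    Finset.card_image_of_injOn (hfst.mono hsub)]

/-- `#B = #(womenOf M' B) ≤ #(womenOf M B) ≤ #B`. -/
theorem womenOf_eq_of_subset (hM : I.IsMatching M) (hM' : J.IsMatching M')
    (hB : ∀ m ∈ B, ∃ w, (m, w) ∈ M') (hsub : womenOf M' B ⊆ womenOf M B) :
    womenOf M' B = womenOf M B ∧ ∀ m ∈ B, ∃ w, (m, w) ∈ M := by
  have hmen_sub : ∀ M : Finset (α × β), (M.filter fun p => p.1 ∈ B).image Prod.fst ⊆ B := by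
    intro M m
    simp only [Finset.mem_image, Finset.mem_filter]
    rintro ⟨p, ⟨-, hp⟩, rfl⟩
    exact hp
  have hmen' : (M'.filter fun p => p.1 ∈ B).image Prod.fst = B := by
    refine (hmen_sub M').antisymm fun m hm => ?_
    obtain ⟨w, hw⟩ := hB m hm
    exact Finset.mem_image.2 ⟨(m, w), Finset.mem_filter.2 ⟨hw, hm⟩, rfl⟩
  have hcard' := card_womenOf (B := B) hM'.injOn_fst hM'.injOn_snd
  have hcard := card_womenOf (B := B) hM.injOn_fst hM.injOn_snd
  rw [hmen'] at hcard'
  have hle := Finset.card_le_card (hmen_sub M)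
  refine ⟨Finset.eq_of_subset_of_card_le hsub (by omega), fun m hm => ?_⟩
  have hmen : (M.filter fun p => p.1 ∈ B).image Prod.fst = B :=
    Finset.eq_of_subset_of_card_le (hmen_sub M) (by have := Finset.card_le_card hsub; omega)
  obtain ⟨⟨m₀, w⟩, hp, rfl⟩ := Finset.mem_image.1 (hmen ▸ hm)
  exact ⟨w, (Finset.mem_filter.1 hp).1⟩

end Matchings

section DeferredAcceptance

variable {α β : Type} {J : SMInst α β} {L L' A B : List (α × β)} {M' : Finset (α × β)}
  {m : α} {w w' : β}

/-- The man `w` holds after the proposals `L`, listed with the most recent first. -/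
noncomputable def held (J : SMInst α β) : List (α × β) → β → Option α
  | [], _ => none
  | p :: L, w =>
    if p.2 = w ∧ J.wAcc w p.1 ∧ ∀ m₀, held J L w = some m₀ → J.wPref w p.1 m₀
    then some p.1 else held J L w

theorem held_mem (h : J.held L w = some m) : (m, w) ∈ L ∧ J.wAcc w m := by
  induction L with
  | nil => simp [held] at h
  | cons p L ih =>
    rw [held] at h
    split_ifs at h with hc
    · cases h
      exact ⟨by simp [← hc.1], hc.2.1⟩
    · exact (ih h).imp_left (List.mem_cons_of_mem _)

theorem exists_held_cons (p : α × β) (h : J.held L w = some m) :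
    ∃ m₁, J.held (p :: L) w = some m₁ ∧ (m₁ = m ∨ J.wPref w m₁ m) := by
  rw [held]
  split_ifs with hc
  · exact ⟨p.1, rfl, Or.inr (hc.2.2 m h)⟩
  · exact ⟨m, h, Or.inl rfl⟩

theorem exists_held_of_suffix (hsuf : L' <:+ L) (h : J.held L' w = some m) :
    ∃ m₁, J.held L w = some m₁ ∧ (m₁ = m ∨ J.wPref w m₁ m) := by
  obtain ⟨t, rfl⟩ := hsuf
  induction t with
  | nil => exact ⟨m, h, Or.inl rfl⟩
  | cons p t ih =>
    obtain ⟨m₁, h₁, hle₁⟩ := ih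
    obtain ⟨m₂, h₂, rfl | hlt₂⟩ := exists_held_cons p h₁
    · exact ⟨m₂, h₂, hle₁⟩
    · exact ⟨m₂, h₂, Or.inr (hle₁.elim (· ▸ hlt₂) (RankLT.trans hlt₂))⟩

theorem exists_held_of_mem (hs : J.WStrict) (hmem : (m, w) ∈ L) (hacc : J.wAcc w m) :
    ∃ m₀, J.held L w = some m₀ ∧ (m₀ = m ∨ J.wPref w m₀ m) := by
  induction L with
  | nil => simp at hmem
  | cons p L ih =>
    rw [held]
    split_ifs with hc
    · refine ⟨p.1, rfl, ?_⟩
      rcases List.mem_cons.1 hmem with rfl | hmem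
      · exact Or.inl rfl
      · obtain ⟨m₀, hm₀, hle⟩ := ih hmem
        exact Or.inr (hle.elim (· ▸ hc.2.2 m₀ hm₀) (RankLT.trans (hc.2.2 m₀ hm₀)))
    · rcases List.mem_cons.1 hmem with rfl | hmem
      · push Not at hc
        obtain ⟨m₀, hm₀, hnot⟩ := hc rfl hacc
        refine ⟨m₀, hm₀, ?_⟩
        by_cases hm : m₀ = m
        · exact Or.inl hm
        · exact Or.inr ((RankLT.total (hs w) (held_mem hm₀).2 hacc hm).resolve_right hnot)
      · exact ih hmem

theorem held_cons_eq_some {p : α × β} (h : J.held (p :: L) w = some m) :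
    p = (m, w) ∨ J.held L w = some m := by
  rw [held] at h
  split_ifs at h with hc
  · cases h
    exact Or.inl (Prod.ext rfl hc.1)
  · exact Or.inr h

theorem held_of_held_suffix (hs : J.WStrict) (hmem : (m, w) ∈ L') (hsuf : L' <:+ L)
    (h : J.held L w = some m) : J.held L' w = some m := by
  obtain ⟨m₀, h₀, hle₀⟩ := exists_held_of_mem hs hmem (held_mem h).2
  obtain ⟨m₁, h₁, hle₁⟩ := exists_held_of_suffix hsuf h₀
  cases h.symm.trans h₁
  rcases hle₀ with rfl | hlt₀
  · exact h₀
  · exact (hle₁.elim (fun h => RankLT.irrefl _ (h ▸ hlt₀)) (RankLT.asymm hlt₀)).elim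

theorem held_append (hs : J.WStrict) (h : J.held (A ++ B) w = some m) :
    (m, w) ∈ A ∨ J.held B w = some m := by
  rcases List.mem_append.1 (held_mem h).1 with hA | hB
  · exact Or.inl hA
  · exact Or.inr (held_of_held_suffix hs hB (List.suffix_append A B) h)

/-- Runs of men-proposing deferred acceptance: a man whom no woman holds proposes to a best woman
he has not proposed to yet. -/
inductive IsRun (J : SMInst α β) : List (α × β) → Prop
  | nil : IsRun J []
  | cons {L : List (α × β)} {m : α} {w : β} : IsRun J L → (∀ v, J.held L v ≠ some m) →
      J.mAcc m w → (m, w) ∉ L → (∀ w', J.mAcc m w' → (m, w') ∉ L → ¬ J.mPref m w' w) →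
      IsRun J ((m, w) :: L)

namespace IsRun

theorem mAcc_of_mem (hL : J.IsRun L) (h : (m, w) ∈ L) : J.mAcc m w := by
  induction hL with
  | nil => simp at h
  | cons _ _ hacc _ _ ih =>
    rcases List.mem_cons.1 h with heq | h
    · cases heq; exact hacc
    · exact ih h

theorem of_suffix (hL : J.IsRun L) (hsuf : L' <:+ L) : J.IsRun L' := by
  induction hL with
  | nil => rw [List.suffix_nil.1 hsuf]; exact nil
  | cons hL hfree hacc hnew hbest ih =>
    rcases List.suffix_cons_iff.1 hsuf with rfl | h
    · exact cons hL hfree hacc hnew hbest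
    · exact ih h

theorem nodup (hL : J.IsRun L) : L.Nodup := by
  induction hL with
  | nil => exact List.nodup_nil
  | cons _ _ _ hnew _ ih => exact List.nodup_cons.2 ⟨hnew, ih⟩

theorem mem_of_mPref (hL : J.IsRun L) (hmem : (m, w) ∈ L) (hacc : J.mAcc m w')
    (hpref : J.mPref m w' w) : (m, w') ∈ L := by
  induction hL with
  | nil => simp at hmem
  | cons _ _ _ _ hbest ih =>
    rcases List.mem_cons.1 hmem with heq | hmem
    · cases heq
      by_contra hnot
      exact hbest w' hacc (fun h => hnot (List.mem_cons_of_mem _ h)) hpref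
    · exact List.mem_cons_of_mem _ (ih hmem)

theorem eq_of_held_eq (hL : J.IsRun L) (h : J.held L w = some m) (h' : J.held L w' = some m) :
    w = w' := by
  induction hL with
  | nil => simp [held] at h
  | cons _ hfree _ _ _ ih =>
    rcases held_cons_eq_some h with heq | hold <;>
      rcases held_cons_eq_some h' with heq' | hold'
    · exact (congrArg Prod.snd heq).symm.trans (congrArg Prod.snd heq')
    · cases heq; exact (hfree w' hold').elim
    · cases heq'; exact (hfree w hold).elim
    · exact ih hold hold'

theorem mPref_of_mem_append (hs : J.MStrict) (hL : J.IsRun (A ++ B)) (hA : (m, w) ∈ A)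
    (hB : (m, w') ∈ B) : J.mPref m w' w := by
  induction A with
  | nil => simp at hA
  | cons p A ih =>
    have hL' : J.IsRun (A ++ B) := hL.of_suffix (List.suffix_cons _ _)
    rcases List.mem_cons.1 hA with rfl | hA
    · cases hL with
      | cons _ _ hacc hnew _ =>
        have hB' : (m, w') ∈ A ++ B := List.mem_append_right _ hB
        have hne : w' ≠ w := by rintro rfl; exact hnew hB'
        refine (RankLT.total (hs m) (hL'.mAcc_of_mem hB') hacc hne).resolve_right fun hpref => ?_
        exact hnew (hL'.mem_of_mPref hB' hacc hpref)
    · exact ih hL' hA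

/-- A man's partner only gets worse during a run. -/
theorem mPref_of_held_append (hs : J.NoTies) (hL : J.IsRun (A ++ B))
    (hB : J.held B w = some m) (h : J.held (A ++ B) w' = some m) (hne : w' ≠ w) :
    J.mPref m w w' := by
  rcases held_append hs.2 h with hA | hB'
  · exact hL.mPref_of_mem_append hs.1 hA (held_mem hB).1
  · exact absurd ((hL.of_suffix (List.suffix_append A B)).eq_of_held_eq hB' hB) hne

theorem exists_cons [Fintype β] (hL : J.IsRun L) (hfree : ∀ v, J.held L v ≠ some m)
    (hacc : J.mAcc m w) (hnew : (m, w) ∉ L) : ∃ w₀, J.IsRun ((m, w₀) :: L) := by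
  obtain ⟨w₀, hw₀, hmin⟩ := Finset.exists_min_image
    (Finset.univ.filter fun w' => J.mAcc m w' ∧ (m, w') ∉ L) (fun w' => (J.mpref m w').getD 0)
    ⟨w, by simp [hacc, hnew]⟩
  simp only [Finset.mem_filter, Finset.mem_univ, true_and] at hw₀ hmin
  refine ⟨w₀, cons hL hfree hw₀.1 hw₀.2 fun w' hacc' hnew' ⟨r', r₀, h', h₀, hlt⟩ => ?_⟩
  have := hmin w' ⟨hacc', hnew'⟩
  simp only [h', h₀, Option.getD_some] at this
  omega

end IsRun

def IsCompleteRun (J : SMInst α β) (L : List (α × β)) : Prop :=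
  J.IsRun L ∧ ∀ m, (∀ v, J.held L v ≠ some m) → ∀ w, J.mAcc m w → (m, w) ∈ L

variable [Fintype α] [Fintype β]

theorem exists_isCompleteRun (J : SMInst α β) : ∃ L, J.IsCompleteRun L := by
  by_contra! hcon
  have hgrow : ∀ k, ∃ L, J.IsRun L ∧ L.length = k := by
    intro k
    induction k with
    | zero => exact ⟨[], IsRun.nil, rfl⟩
    | succ k ih =>
      obtain ⟨L, hL, rfl⟩ := ih
      obtain ⟨m, hfree, w, hacc, hnew⟩ : ∃ m, (∀ v, J.held L v ≠ some m) ∧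
          ∃ w, J.mAcc m w ∧ (m, w) ∉ L := by
        simpa [IsCompleteRun, hL] using hcon L
      obtain ⟨w₀, hL'⟩ := hL.exists_cons hfree hacc hnew
      exact ⟨_, hL', rfl⟩
  obtain ⟨L, hL, hlen⟩ := hgrow (Fintype.card (α × β) + 1)
  have := hL.nodup.length_le_card
  omega

noncomputable def daList (J : SMInst α β) : List (α × β) := (exists_isCompleteRun J).choose

theorem isCompleteRun_daList (J : SMInst α β) : J.IsCompleteRun J.daList :=
  (exists_isCompleteRun J).choose_spec

theorem isRun_daList (J : SMInst α β) : J.IsRun J.daList := (isCompleteRun_daList J).1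

noncomputable def daMatch (J : SMInst α β) : Finset (α × β) :=
  Finset.univ.filter fun p => J.held J.daList p.2 = some p.1

theorem mem_daMatch : (m, w) ∈ J.daMatch ↔ J.held J.daList w = some m := by
  simp [daMatch]

theorem mem_daList_of_mem_daMatch (h : (m, w) ∈ J.daMatch) : (m, w) ∈ J.daList :=
  (held_mem (mem_daMatch.1 h)).1

theorem daMatch_isMatching (J : SMInst α β) : J.IsMatching J.daMatch := by
  refine ⟨?_, ?_, ?_⟩
  · rintro ⟨m, w⟩ hp
    obtain ⟨hmem, hacc⟩ := held_mem (mem_daMatch.1 hp)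
    exact ⟨(isRun_daList J).mAcc_of_mem hmem, hacc⟩
  · rintro ⟨m, w⟩ hp ⟨m', w'⟩ hq (rfl : m = m')
    rw [(isRun_daList J).eq_of_held_eq (mem_daMatch.1 hp) (mem_daMatch.1 hq)]
  · rintro ⟨m, w⟩ hp ⟨m', w'⟩ hq (rfl : w = w')
    cases (mem_daMatch.1 hp).symm.trans (mem_daMatch.1 hq)
    rfl

theorem mem_daList_of_mPref (hacc : J.mAcc m w)
    (h : mSingle J.daMatch m ∨ ∃ w', (m, w') ∈ J.daMatch ∧ J.mPref m w w') :
    (m, w) ∈ J.daList := by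
  rcases h with hsingle | ⟨w', hw', hpref⟩
  · exact (isCompleteRun_daList J).2 m (fun v hv => hsingle v (mem_daMatch.2 hv)) w hacc
  · exact (isRun_daList J).mem_of_mPref (mem_daList_of_mem_daMatch hw') hacc hpref

theorem daMatch_isStable (hJ : J.NoTies) : J.IsStable J.daMatch := by
  refine ⟨daMatch_isMatching J, fun m w ⟨hmw, hwm, hm, hw⟩ => ?_⟩
  obtain ⟨m₀, h₀, hle⟩ := exists_held_of_mem hJ.2 (mem_daList_of_mPref hmw hm) hwm
  rcases hw with hsingle | ⟨m', hm', hpref⟩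
  · exact hsingle m₀ (mem_daMatch.2 h₀)
  · cases (mem_daMatch.1 hm').symm.trans h₀
    exact hle.elim (fun h => RankLT.irrefl _ (h ▸ hpref)) (RankLT.asymm hpref)

theorem mem_daList_of_mPrefMatching (hM' : J.IsMatching M') (h : J.mPrefMatching m M' J.daMatch)
    (hw : (m, w) ∈ M') : (m, w) ∈ J.daList := by
  obtain ⟨w₀, hw₀, hacc, hpref⟩ := h
  cases hM'.snd_eq hw hw₀
  exact mem_daList_of_mPref hacc hpref

end DeferredAcceptance

section Blocking

variable {α β : Type} [Fintype α] [Fintype β] {J J' : SMInst α β} {A L : List (α × β)}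
  {M' : Finset (α × β)} {B : Finset α} {W : Finset β} {m m' : α} {w w' : β}

theorem mem_or_held_of_mem_daMatch (hJ : J.NoTies) {p : α × β} (hsplit : J.daList = A ++ p :: L)
    (h : (m, w) ∈ J.daMatch) : (m, w) ∈ A ∨ (m, w) = p ∨ J.held L w = some m := by
  rw [mem_daMatch, hsplit, List.append_cons] at h
  simpa [or_assoc] using held_append hJ.2 h

/-- `A` lists the proposals made after `(m', w)`. -/
theorem eq_of_mem_daMatch_of_not_mem (hJ : J.NoTies) (hsplit : J.daList = A ++ (m', w) :: L)
    (h : (m', w') ∈ J.daMatch) (hA : (m', w') ∉ A) : w' = w := by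
  obtain hA' | heq | hheld := mem_or_held_of_mem_daMatch hJ hsplit h
  · exact (hA hA').elim
  · exact congrArg Prod.snd heq
  · have hrun : J.IsRun ((m', w) :: L) := (hsplit ▸ isRun_daList J).of_suffix
      (List.suffix_append _ _)
    cases hrun with
    | cons _ hfree _ _ _ => exact (hfree w' hheld).elim

/-- A man whom `w` holds just before `(m', w)` and who is rejected for good ends up worse off. -/
theorem mPref_of_held_of_mem_daMatch (hJ : J.NoTies) (hsplit : J.daList = A ++ (m', w) :: L)
    (hm'w : (m', w) ∈ J.daMatch) (hheld : J.held L w = some m) (hmm' : m ≠ m')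
    (hw' : (m, w') ∈ J.daMatch) : J.mPref m w w' := by
  have hsplit' : J.daList = (A ++ [(m', w)]) ++ L := by rw [hsplit, List.append_cons]
  have hne : w' ≠ w := fun h => hmm' ((daMatch_isMatching J).fst_eq (h ▸ hw') hm'w)
  exact (hsplit' ▸ isRun_daList J).mPref_of_held_append hJ hheld
    (hsplit' ▸ mem_daMatch.1 hw') hne

/-- `(m', w)` is the last proposal of a man of `B` to a woman of `W`. Then `w` is the final partner
of `m'`, and the man `w` held just before is not in `B` and blocks `M'` with her. -/
theorem exists_blocks_of_last_proposal (hJ : J.NoTies) (hM' : J.IsMatching M')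
    (hB : ∀ m, m ∈ B ↔ J.mPrefMatching m M' J.daMatch)
    (hBM : ∀ m ∈ B, ∃ w, (m, w) ∈ J.daMatch)
    (hW : ∀ w, w ∈ W ↔ ∃ m ∈ B, (m, w) ∈ J.daMatch)
    (hW' : ∀ w, w ∈ W ↔ ∃ m ∈ B, (m, w) ∈ M')
    (hsplit : J.daList = A ++ (m', w) :: L) (hlast : ∀ x ∈ A, ¬ (x.1 ∈ B ∧ x.2 ∈ W))
    (hm' : m' ∈ B) : ∃ m ∉ B, J.Blocks M' m w := by
  have hM := daMatch_isMatching J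
  have hrun : J.IsRun (A ++ (m', w) :: L) := hsplit ▸ isRun_daList J
  have hrunL : J.IsRun L := hrun.of_suffix ((List.suffix_cons _ _).trans (List.suffix_append _ _))
  have hnew : (m', w) ∉ L :=
    (List.nodup_cons.1 (hrun.nodup.sublist (List.sublist_append_right A _))).1
  have hA : ∀ m ∈ B, ∀ v, (m, v) ∈ J.daMatch → (m, v) ∉ A :=
    fun m hm v hv hA => hlast _ hA ⟨hm, (hW v).2 ⟨m, hm, hv⟩⟩
  have hm'w : (m', w) ∈ J.daMatch := by
    obtain ⟨v, hv⟩ := hBM m' hm'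
    rwa [← eq_of_mem_daMatch_of_not_mem hJ hsplit hv (hA m' hm' v hv)]
  obtain ⟨m₂, hm₂, hm₂w⟩ := (hW' w).1 ((hW w).2 ⟨m', hm', hm'w⟩)
  have hm₂L : (m₂, w) ∈ L := by
    have := mem_daList_of_mPrefMatching hM' ((hB m₂).1 hm₂) hm₂w
    rw [hsplit] at this
    simp only [List.mem_append, List.mem_cons, Prod.mk.injEq, and_true] at this
    obtain hA | rfl | hL := this
    · exact (hlast _ hA ⟨hm₂, (hW' w).2 ⟨m₂, hm₂, hm₂w⟩⟩).elim
    · exact (not_mPrefMatching_of_mem hM hM' hm'w hm₂w ((hB m₂).1 hm₂)).elim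
    · exact hL
  obtain ⟨m, hheld, hle⟩ := exists_held_of_mem hJ.2 hm₂L (hM'.wAcc_of_mem hm₂w)
  have hmm' : m ≠ m' := fun h => hnew (h ▸ (held_mem hheld).1)
  have hmB : m ∉ B := by
    intro hmB
    obtain ⟨v, hv⟩ := hBM m hmB
    obtain hA' | heq | hL := mem_or_held_of_mem_daMatch hJ hsplit hv
    · exact hA m hmB v hv hA'
    · exact hmm' (congrArg Prod.fst heq)
    · cases hrunL.eq_of_held_eq hL hheld
      exact hmm' (hM.fst_eq hv hm'w)
  refine ⟨m, hmB, hrunL.mAcc_of_mem (held_mem hheld).1, (held_mem hheld).2, ?_,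
    Or.inr ⟨m₂, hm₂w, hle.resolve_left fun h => hmB (h ▸ hm₂)⟩⟩
  exact mSingle_or_mPref_of_not_mPrefMatching hM' ((hB m).not.1 hmB)
    fun w₀ w₁ hw₀ hw₁ hnot => RankLT.of_not_rankLT
      (mPref_of_held_of_mem_daMatch hJ hsplit hm'w hheld hmm' hw₁) hnot (hM'.mAcc_of_mem hw₀)

/-- The blocking lemma of Gale and Sotomayor. -/
theorem exists_blocks_of_mPrefMatching_daMatch (hJ : J.NoTies) (hM' : J.IsMatching M')
    (hne : ∃ m, J.mPrefMatching m M' J.daMatch) :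
    ∃ m w, ¬ J.mPrefMatching m M' J.daMatch ∧ J.Blocks M' m w := by
  set B := Finset.univ.filter fun m => J.mPrefMatching m M' J.daMatch
  have hB : ∀ m, m ∈ B ↔ J.mPrefMatching m M' J.daMatch := by simp [B]
  by_cases hcase : ∃ m ∈ B, ∃ w, (m, w) ∈ M' ∧ ∀ m₁, (m₁, w) ∈ J.daMatch → m₁ ∉ B
  · obtain ⟨m, hm, w, hmw, hw⟩ := hcase
    obtain ⟨m₁, hm₁, hblocks⟩ := exists_blocks_of_isStable hJ (daMatch_isStable hJ) hM'
      ((hB m).1 hm) hmw fun m₁ h => (hB m₁).not.1 (hw m₁ h)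
    exact ⟨m₁, w, hm₁, hblocks⟩
  push Not at hcase
  have hBM' : ∀ m ∈ B, ∃ w, (m, w) ∈ M' := fun m hm => by
    obtain ⟨w, hw, -⟩ := (hB m).1 hm
    exact ⟨w, hw⟩
  obtain ⟨hW, hBM⟩ := womenOf_eq_of_subset (daMatch_isMatching J) hM' hBM' fun w hw => by
    obtain ⟨m, hm, hmw⟩ := mem_womenOf.1 hw
    obtain ⟨m₁, hm₁w, hm₁⟩ := hcase m hm w hmw
    exact mem_womenOf.2 ⟨m₁, hm₁, hm₁w⟩
  let last : α × β → Bool := fun x => decide (x.1 ∈ B ∧ x.2 ∈ womenOf J.daMatch B)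
  obtain ⟨p, hp⟩ : ∃ p, J.daList.find? last = some p := by
    obtain ⟨m, hm⟩ := hne
    obtain ⟨w, hw, -⟩ := id hm
    refine Option.isSome_iff_exists.1 (List.find?_isSome.2 ⟨(m, w), ?_, ?_⟩)
    · exact mem_daList_of_mPrefMatching hM' hm hw
    · simpa [last, ← hW] using ⟨(hB m).2 hm, mem_womenOf.2 ⟨m, (hB m).2 hm, hw⟩⟩
  obtain ⟨hpBW, A, L, hsplit, hA⟩ := List.find?_eq_some_iff_append.1 hp
  simp only [last, decide_eq_true_eq] at hpBW
  obtain ⟨m, hm, hblocks⟩ := exists_blocks_of_last_proposal hJ hM' hB hBM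
    (fun w => mem_womenOf) (fun w => by rw [← hW]; exact mem_womenOf) hsplit
    (by simpa [last, imp_iff_not_or] using hA)
    hpBW.1
  exact ⟨m, p.2, (hB m).not.1 hm, hblocks⟩

/-- Dubins–Freedman: the blocking lemma yields a pair blocking the manipulated outcome whose man is
outside the coalition, so it blocks under the reported lists too. -/
theorem not_forall_mPrefMatching_daMatch (hJ : J.NoTies) (hJ' : J'.NoTies) {C : Set α}
    (hC : C.Nonempty) (hw : J.wpref = J'.wpref) (hoff : ∀ m ∉ C, J.mpref m = J'.mpref m) :
    ¬ ∀ m ∈ C, J.mPrefMatching m J'.daMatch J.daMatch := by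
  intro hpref
  have hM' := daMatch_isMatching J'
  have hM'J : J.IsMatching J'.daMatch := by
    refine ⟨fun ⟨m, w⟩ hp => ⟨?_, ?_⟩, hM'.2⟩
    · by_cases hm : m ∈ C
      · obtain ⟨w₀, hw₀, hacc₀, -⟩ := hpref m hm
        exact hM'.snd_eq hp hw₀ ▸ hacc₀
      · simpa only [mAcc, hoff m hm] using hM'.mAcc_of_mem hp
    · simpa only [wAcc, hw] using hM'.wAcc_of_mem hp
  obtain ⟨m, w, hm, hblocks⟩ :=
    exists_blocks_of_mPrefMatching_daMatch hJ hM'J (hC.imp hpref)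
  have hmC : m ∉ C := fun h => hm (hpref m h)
  exact (daMatch_isStable hJ').2 m w ((blocks_congr (hoff m hmC) (congrFun hw w)).1 hblocks)

end Blocking

section TieBreaking

variable {k l : ℕ} (I : SMInst (Fin k) (Fin l))

def breakTies : SMInst (Fin k) (Fin l) :=
  ⟨fun m => breakTiesByIndex (I.mpref m), fun w => breakTiesByIndex (I.wpref w)⟩

theorem refines_breakTies : I.Refines I.breakTies :=
  ⟨fun _ _ => by simp [mAcc, breakTies, isSome_breakTiesByIndex],
    fun _ _ => by simp [wAcc, breakTies, isSome_breakTiesByIndex],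
    fun _ _ _ => RankLT.breakTiesByIndex, fun _ _ _ => RankLT.breakTiesByIndex⟩

theorem noTies_breakTies : I.breakTies.NoTies :=
  ⟨fun _ _ _ => breakTiesByIndex_injective, fun _ _ _ => breakTiesByIndex_injective⟩

end TieBreaking

end SMInst

/-- MAX SMTI admits a 2-approximate-stable mechanism that is man-strategy-proof against
coalitions: no nonempty coalition of men can falsify their preference lists so that
every member of the coalition obtains an outcome he prefers with respect to his true list. -/
theorem coalition_man_sp_two_approx_stable_mechanism_SMTI :
    ∃ S : ∀ n : ℕ, SMInst (Fin n) (Fin n) → Finset (Fin n × Fin n),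
      (∀ (n : ℕ) (I : SMInst (Fin n) (Fin n)),
          I.IsStable (S n I) ∧
          ∀ Mopt : Finset (Fin n × Fin n), I.IsStable Mopt →
            Mopt.card ≤ 2 * (S n I).card) ∧
      ¬ ∃ (n : ℕ) (I I' : SMInst (Fin n) (Fin n)) (C : Finset (Fin n)),
          C.Nonempty ∧ I.wpref = I'.wpref ∧
          (∀ m ∉ C, I.mpref m = I'.mpref m) ∧
          ∀ m ∈ C, I.mPrefMatching m (S n I') (S n I) := by
  refine ⟨fun n I => I.breakTies.daMatch, fun n I => ?_, ?_⟩
  · have hstable := I.refines_breakTies.isStable (SMInst.daMatch_isStable I.noTies_breakTies)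
    exact ⟨hstable, fun Mopt hMopt => hstable.card_le_two_mul hMopt.1⟩
  · rintro ⟨n, I, I', C, hC, hw, hoff, hpref⟩
    refine SMInst.not_forall_mPrefMatching_daMatch I.noTies_breakTies I'.noTies_breakTies
      (C := (C : Set (Fin n))) hC (by simp [SMInst.breakTies, hw]) (fun m hm => ?_)
      fun m hm => I.refines_breakTies.mPrefMatching (hpref m hm)
    simp [SMInst.breakTies, hoff m hm]
end
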